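/- Fix an integer ℓ ≥ 0. Assume the β-strong P-order and the γ_ℓ-ℓ-weak C-order assumptions hold for some β ≥ 0 and γ_ℓ ≥ 0. Then every ℓ-Greedy-Local matching M' satisfies w(M) ≤ max{1+β, β+γ_ℓ}·w(M') for every matching M of the instance; in other words, the ℓ-Greedy-Local algorithm has approximation ratio at most max{1+β, β+γ_ℓ}. -/

import Mathlib

/-!
Charge every edge `e = (p, c)` of `M` to an edge of `M'`. If `c` was already taken in `M'` by
an earlier `p_i`, charge `e` to `(p_i, c)`; the strong P-order makes this cost at most `β` times
`w (p_i, c)`. Otherwise `c` is still available to `p`, and `e` is charged to the greedy edge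
`(p, c*)`: if `c` is among the first `ℓ + 1` available neighbours, `w e ≤ w (p, c*)`; if not, the
first available neighbour `c₁` is separated from `c` by at least `ℓ` neighbours of `p`, so the
weak C-order gives `w e ≤ γℓ · w (p, c₁) ≤ γℓ · w (p, c*)`. Since `M` is a matching, an edge of
`M'` receives at most one charge of each kind, for a total factor `β + max 1 γℓ`.
-/

/-- A matching of a bipartite instance with edge set `E ⊆ P × C`. -/
def IsBipMatching {s q : ℕ} (E M : Finset (Fin s × Fin q)) : Prop :=
  M ⊆ E ∧ ∀ e₁ ∈ M, ∀ e₂ ∈ M, e₁ ≠ e₂ → e₁.1 ≠ e₂.1 ∧ e₁.2 ≠ e₂.2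

/-- The β-strong P-order assumption. -/
def StrongPOrder {s q : ℕ} (E : Finset (Fin s × Fin q)) (w : Fin s × Fin q → ℝ)
    (β : ℝ) : Prop :=
  ∀ i j : Fin s, i < j → ∀ c : Fin q, (i, c) ∈ E → (j, c) ∈ E → w (j, c) ≤ β * w (i, c)

/-- The γℓ-ℓ-weak C-order assumption: the bound is only required when at least ℓ other
neighbors of `p` lie strictly between `c_i` and `c_j` in C-order. -/
def WeakCOrder {s q : ℕ} (E : Finset (Fin s × Fin q)) (w : Fin s × Fin q → ℝ)
    (ℓ : ℕ) (γℓ : ℝ) : Prop :=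
  ∀ i j : Fin q, i < j → ∀ p : Fin s, (p, i) ∈ E → (p, j) ∈ E →
    ℓ ≤ (Finset.univ.filter (fun x : Fin q => i < x ∧ x < j ∧ (p, x) ∈ E)).card →
    w (p, j) ≤ γℓ * w (p, i)

/-- `availSet E M' j` = the set `A_j` of C-vertices `c` with `(p_j, c) ∈ E` that are not
blocked by an edge `(p_i, c) ∈ M'` with `i < j`. -/
def availSet {s q : ℕ} (E M' : Finset (Fin s × Fin q)) (j : Fin s) : Finset (Fin q) :=
  Finset.univ.filter (fun c : Fin q => (j, c) ∈ E ∧ ∀ i : Fin s, i < j → (i, c) ∉ M')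

/-- `firstAvail E M' ℓ j` = the set `F_j` of the min(ℓ+1, |A_j|) first elements of `A_j`
in C-order (those with at most ℓ smaller elements of `A_j`). -/
def firstAvail {s q : ℕ} (E M' : Finset (Fin s × Fin q)) (ℓ : ℕ) (j : Fin s) :
    Finset (Fin q) :=
  (availSet E M' j).filter
    (fun c : Fin q => ((availSet E M' j).filter (fun c' : Fin q => c' < c)).card ≤ ℓ)

/-- An ℓ-Greedy-Local matching: a matching `M'` such that whenever `A_j ≠ ∅`, `p_j` is matched
to a maximum-weight edge among `F_j` (the ℓ+1 first still-available C-neighbors), and whenever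
`A_j = ∅`, `p_j` is unmatched. -/
def GreedyLocalL {s q : ℕ} (E : Finset (Fin s × Fin q)) (w : Fin s × Fin q → ℝ) (ℓ : ℕ)
    (M' : Finset (Fin s × Fin q)) : Prop :=
  IsBipMatching E M' ∧ ∀ j : Fin s,
    ((availSet E M' j).Nonempty →
      ∃ c ∈ firstAvail E M' ℓ j, (j, c) ∈ M' ∧
        ∀ c' ∈ firstAvail E M' ℓ j, w (j, c') ≤ w (j, c)) ∧
    (availSet E M' j = ∅ → ∀ c : Fin q, (j, c) ∉ M')

open Finset

theorem IsBipMatching.injOn_fst {s q : ℕ} {E M : Finset (Fin s × Fin q)}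
    (hM : IsBipMatching E M) : Set.InjOn Prod.fst (M : Set (Fin s × Fin q)) :=
  fun e₁ h₁ e₂ h₂ h => by_contra fun hne => (hM.2 e₁ h₁ e₂ h₂ hne).1 h

theorem IsBipMatching.injOn_snd {s q : ℕ} {E M : Finset (Fin s × Fin q)}
    (hM : IsBipMatching E M) : Set.InjOn Prod.snd (M : Set (Fin s × Fin q)) :=
  fun e₁ h₁ e₂ h₂ h => by_contra fun hne => (hM.2 e₁ h₁ e₂ h₂ hne).2 h

theorem Finset.sum_le_mul_sum_of_charge {α κ : Type*} [DecidableEq α] {S T : Finset α}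
    {w : α → ℝ} {k : ℝ} (hk : 0 ≤ k) (hT : ∀ f ∈ T, 0 ≤ w f) (key : α → κ)
    (hkey : Set.InjOn key S) (hcharge : ∀ e ∈ S, ∃ f ∈ T, key f = key e ∧ w e ≤ k * w f) :
    ∑ e ∈ S, w e ≤ k * ∑ f ∈ T, w f := by
  choose! φ hφT hφkey hφw using hcharge
  have hφinj : Set.InjOn φ S := fun e₁ h₁ e₂ h₂ h =>
    hkey h₁ h₂ <| by rw [← hφkey e₁ h₁, ← hφkey e₂ h₂, h]
  calc ∑ e ∈ S, w e ≤ ∑ e ∈ S, k * w (φ e) := sum_le_sum hφw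
    _ = k * ∑ f ∈ S.image φ, w f := by rw [← mul_sum, sum_image hφinj]
    _ ≤ k * ∑ f ∈ T, w f := by
        gcongr
        · exact fun f hf _ => hT f hf
        · exact image_subset_iff.mpr hφT

section Greedy

variable {s q : ℕ} {E M' : Finset (Fin s × Fin q)} {ℓ : ℕ} {j : Fin s}

theorem min'_mem_firstAvail (hA : (availSet E M' j).Nonempty) :
    (availSet E M' j).min' hA ∈ firstAvail E M' ℓ j := by
  refine mem_filter.mpr ⟨min'_mem _ _, ?_⟩
  rw [filter_eq_empty_iff.mpr fun c hc => not_lt.mpr (min'_le _ c hc), card_empty]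
  exact Nat.zero_le ℓ

theorem le_card_between_min'_of_not_mem_firstAvail {c : Fin q} (hc : c ∈ availSet E M' j)
    (hcF : c ∉ firstAvail E M' ℓ j) :
    (availSet E M' j).min' ⟨c, hc⟩ < c ∧
      ℓ ≤ (univ.filter fun x : Fin q =>
        (availSet E M' j).min' ⟨c, hc⟩ < x ∧ x < c ∧ (j, x) ∈ E).card := by
  set A := availSet E M' j
  set c₁ := A.min' ⟨c, hc⟩
  have hc₁F : c₁ ∈ firstAvail E M' ℓ j := min'_mem_firstAvail _
  have hc₁c : c₁ < c := lt_of_le_of_ne (min'_le _ _ hc) fun h => hcF (h ▸ hc₁F)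
  have hbefore : ℓ < (A.filter (· < c)).card := by
    by_contra! hle
    exact hcF (mem_filter.mpr ⟨hc, hle⟩)
  have hsub : (A.filter (· < c)).erase c₁ ⊆
      univ.filter fun x : Fin q => c₁ < x ∧ x < c ∧ (j, x) ∈ E := by
    intro x hx
    obtain ⟨hxc₁, hxA, hxc⟩ := by simpa only [mem_erase, mem_filter] using hx
    exact mem_filter.mpr ⟨mem_univ x,
      lt_of_le_of_ne (min'_le _ _ hxA) (Ne.symm hxc₁), hxc, (mem_filter.mp hxA).2.1⟩
  refine ⟨hc₁c, ?_⟩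
  calc ℓ ≤ (A.filter (· < c)).card - 1 := Nat.le_sub_one_of_lt hbefore
    _ = ((A.filter (· < c)).erase c₁).card :=
        (card_erase_of_mem (mem_filter.mpr ⟨min'_mem _ _, hc₁c⟩)).symm
    _ ≤ _ := card_le_card hsub

theorem exists_greedy_edge_weight_ge {w : Fin s × Fin q → ℝ} {γℓ : ℝ}
    (hw : ∀ e ∈ E, 0 ≤ w e) (hγ : 0 ≤ γℓ)
    (hordC : WeakCOrder E w ℓ γℓ) (hM' : GreedyLocalL E w ℓ M') {c : Fin q}
    (hc : c ∈ availSet E M' j) :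
    ∃ c', (j, c') ∈ M' ∧ w (j, c) ≤ max 1 γℓ * w (j, c') := by
  obtain ⟨cg, hcgF, hcgM', hcgmax⟩ := (hM'.2 j).1 ⟨c, hc⟩
  have hcg : 0 ≤ w (j, cg) := hw _ (hM'.1.1 hcgM')
  refine ⟨cg, hcgM', ?_⟩
  by_cases hcF : c ∈ firstAvail E M' ℓ j
  · exact (hcgmax c hcF).trans (le_mul_of_one_le_left hcg (le_max_left 1 γℓ))
  · obtain ⟨hc₁c, hbetween⟩ := le_card_between_min'_of_not_mem_firstAvail hc hcF
    have hc₁A := min'_mem (availSet E M' j) ⟨c, hc⟩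
    calc w (j, c) ≤ γℓ * w (j, (availSet E M' j).min' ⟨c, hc⟩) :=
          hordC _ c hc₁c j (mem_filter.mp hc₁A).2.1 (mem_filter.mp hc).2.1 hbetween
      _ ≤ γℓ * w (j, cg) := by gcongr; exact hcgmax _ (min'_mem_firstAvail _)
      _ ≤ max 1 γℓ * w (j, cg) := by gcongr; exact le_max_right 1 γℓ

theorem sum_filter_blocked_le {w : Fin s × Fin q → ℝ} {β : ℝ} (hw : ∀ e ∈ E, 0 ≤ w e)
    (hβ : 0 ≤ β) (hordP : StrongPOrder E w β) (hM'E : M' ⊆ E) {M : Finset (Fin s × Fin q)}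
    (hM : IsBipMatching E M) :
    ∑ e ∈ M.filter (fun e => ∃ i, i < e.1 ∧ (i, e.2) ∈ M'), w e ≤ β * ∑ f ∈ M', w f := by
  refine sum_le_mul_sum_of_charge hβ (fun f hf => hw f (hM'E hf)) Prod.snd
    (hM.injOn_snd.mono (filter_subset _ M)) fun e he => ?_
  obtain ⟨heM, i, hi, hiM'⟩ := mem_filter.mp he
  exact ⟨(i, e.2), hiM', rfl, hordP i e.1 hi e.2 (hM'E hiM') (hM.1 heM)⟩

theorem sum_filter_not_blocked_le {w : Fin s × Fin q → ℝ} {γℓ : ℝ}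
    (hw : ∀ e ∈ E, 0 ≤ w e) (hγ : 0 ≤ γℓ) (hordC : WeakCOrder E w ℓ γℓ)
    (hM' : GreedyLocalL E w ℓ M') {M : Finset (Fin s × Fin q)} (hM : IsBipMatching E M) :
    ∑ e ∈ M.filter (fun e => ¬∃ i, i < e.1 ∧ (i, e.2) ∈ M'), w e ≤
      max 1 γℓ * ∑ f ∈ M', w f := by
  refine sum_le_mul_sum_of_charge (zero_le_one.trans (le_max_left 1 γℓ))
    (fun f hf => hw f (hM'.1.1 hf)) Prod.fst (hM.injOn_fst.mono (filter_subset _ M))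
    fun e he => ?_
  obtain ⟨heM, hfree⟩ := mem_filter.mp he
  have havail : e.2 ∈ availSet E M' e.1 :=
    mem_filter.mpr ⟨mem_univ _, hM.1 heM, fun i hi hiM' => hfree ⟨i, hi, hiM'⟩⟩
  obtain ⟨c, hcM', hc⟩ := exists_greedy_edge_weight_ge hw hγ hordC hM' havail
  exact ⟨(e.1, c), hcM', rfl, hc⟩

end Greedy

/-- Under the β-strong P-order and γℓ-ℓ-weak C-order assumptions,
the ℓ-Greedy-Local algorithm is max{1+β, β+γℓ}-approximate. -/
theorem stmt8 {s q : ℕ} (ℓ : ℕ) (E : Finset (Fin s × Fin q)) (w : Fin s × Fin q → ℝ)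
    (hw : ∀ e ∈ E, 0 < w e) (β γℓ : ℝ) (hβ : 0 ≤ β) (hγ : 0 ≤ γℓ)
    (hordP : StrongPOrder E w β) (hordC : WeakCOrder E w ℓ γℓ)
    (M' : Finset (Fin s × Fin q)) (hM' : GreedyLocalL E w ℓ M')
    (M : Finset (Fin s × Fin q)) (hM : IsBipMatching E M) :
    ∑ e ∈ M, w e ≤ max (1 + β) (β + γℓ) * ∑ e ∈ M', w e := by
  have hw₀ : ∀ e ∈ E, 0 ≤ w e := fun e he => (hw e he).le
  rw [← sum_filter_add_sum_filter_not M (fun e => ∃ i, i < e.1 ∧ (i, e.2) ∈ M'),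
    show max (1 + β) (β + γℓ) = β + max 1 γℓ by rw [add_comm 1 β, max_add_add_left], add_mul]
  exact add_le_add (sum_filter_blocked_le hw₀ hβ hordP hM'.1.1 hM)
    (sum_filter_not_blocked_le hw₀ hγ hordC hM' hM)
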